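/- For every R ⊆ C: R is an (α,β) upper distribution reduct if and only if (I) μ_R = μ_C, and (II) μ_{R∖{a}} ≠ μ_C for every a ∈ R. -/
import Mathlib


/-- The indiscernibility class `[x]_R` of `x` for the attribute subset `R`:
all objects agreeing with `x` on every attribute in `R`. -/
def cls {U V A : Type*} (f : A → U → V) (R : Finset A) (x : U) : Set U :=
  {y | ∀ a ∈ R, f a x = f a y}

/-- Classical lower approximation of `X` with respect to `IND(R)`. -/
def lowerA {U V A : Type*} (f : A → U → V) (R : Finset A) (X : Set U) : Set U :=
  {x | cls f R x ⊆ X}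

/-- Classical upper approximation of `X` with respect to `IND(R)`. -/
def upperA {U V A : Type*} (f : A → U → V) (R : Finset A) (X : Set U) : Set U :=
  {x | (cls f R x ∩ X).Nonempty}

/-- α-probabilistic lower approximation: `{x | |[x]_R ∩ X| ≥ α·|[x]_R|}`. -/
noncomputable def aprLow {U V A : Type*} (f : A → U → V) (R : Finset A) (α : ℝ)
    (X : Set U) : Set U :=
  {x | α * ((cls f R x).ncard : ℝ) ≤ (((cls f R x) ∩ X).ncard : ℝ)}

/-- β-probabilistic upper approximation: `{x | |[x]_R ∩ X| > β·|[x]_R|}`. -/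
noncomputable def aprUp {U V A : Type*} (f : A → U → V) (R : Finset A) (β : ℝ)
    (X : Set U) : Set U :=
  {x | β * ((cls f R x).ncard : ℝ) < (((cls f R x) ∩ X).ncard : ℝ)}

/-- `η_R = (Σ_{i=1}^M |lower_R(apr_C^α(Y_i))|)/(|U|·M)`, the sum running over the
decision classes `Y_i = d⁻¹(v)`, `v ∈ d(U)`. -/
noncomputable def eta {U V A : Type*} [Fintype U] [DecidableEq V] (f : A → U → V)
    (C : Finset A) (d : U → V) (α : ℝ) (R : Finset A) : ℝ :=
  (∑ v ∈ Finset.univ.image d,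
      ((lowerA f R (aprLow f C α (d ⁻¹' {v}))).ncard : ℝ)) /
    ((Fintype.card U : ℝ) * ((Finset.univ.image d).card : ℝ))

/-- `μ_R = (Σ_{i=1}^M |upper_R(Apr_C^β(Y_i))|)/(|U|·M)`, the sum running over the
decision classes `Y_i = d⁻¹(v)`, `v ∈ d(U)`. -/
noncomputable def mu {U V A : Type*} [Fintype U] [DecidableEq V] (f : A → U → V)
    (C : Finset A) (d : U → V) (β : ℝ) (R : Finset A) : ℝ :=
  (∑ v ∈ Finset.univ.image d,
      ((upperA f R (aprUp f C β (d ⁻¹' {v}))).ncard : ℝ)) /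
    ((Fintype.card U : ℝ) * ((Finset.univ.image d).card : ℝ))

/-- `R` is an (α,β) lower distribution consistent set:
`apr_R^α(Y_i) = apr_C^α(Y_i)` for every decision class `Y_i`. -/
def LowerConsistent {U V A : Type*} [Fintype U] [DecidableEq V] (f : A → U → V)
    (C : Finset A) (d : U → V) (α : ℝ) (R : Finset A) : Prop :=
  ∀ v ∈ Finset.univ.image d, aprLow f R α (d ⁻¹' {v}) = aprLow f C α (d ⁻¹' {v})

/-- `R` is an (α,β) upper distribution consistent set:
`Apr_R^β(Y_i) = Apr_C^β(Y_i)` for every decision class `Y_i`. -/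
def UpperConsistent {U V A : Type*} [Fintype U] [DecidableEq V] (f : A → U → V)
    (C : Finset A) (d : U → V) (β : ℝ) (R : Finset A) : Prop :=
  ∀ v ∈ Finset.univ.image d, aprUp f R β (d ⁻¹' {v}) = aprUp f C β (d ⁻¹' {v})

/-- `R` is an (α,β) lower distribution reduct: a lower distribution consistent set
no proper subset of which is lower distribution consistent. -/
def LowerReduct {U V A : Type*} [Fintype U] [DecidableEq V] (f : A → U → V)
    (C : Finset A) (d : U → V) (α : ℝ) (R : Finset A) : Prop :=
  LowerConsistent f C d α R ∧ ∀ R' ⊂ R, ¬ LowerConsistent f C d α R'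

/-- `R` is an (α,β) upper distribution reduct: an upper distribution consistent set
no proper subset of which is upper distribution consistent. -/
def UpperReduct {U V A : Type*} [Fintype U] [DecidableEq V] (f : A → U → V)
    (C : Finset A) (d : U → V) (β : ℝ) (R : Finset A) : Prop :=
  UpperConsistent f C d β R ∧ ∀ R' ⊂ R, ¬ UpperConsistent f C d β R'

attribute [local instance] Classical.propDecidable

section UpperAux
variable {U V A : Type*} (f : A → U → V)

lemma mem_cls_self (R : Finset A) (x : U) : x ∈ cls f R x := fun _ _ => rfl

lemma cls_symm {R : Finset A} {x y : U} (h : y ∈ cls f R x) : x ∈ cls f R y :=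
  fun a ha => (h a ha).symm

lemma cls_eq_of_mem {R : Finset A} {x y : U} (h : y ∈ cls f R x) :
    cls f R y = cls f R x := by
  ext z
  constructor <;> intro hz a ha
  · exact (h a ha).trans (hz a ha)
  · exact ((h a ha).symm).trans (hz a ha)

lemma cls_anti {R S : Finset A} (h : R ⊆ S) (x : U) : cls f S x ⊆ cls f R x :=
  fun _ hy a ha => hy a (h ha)

lemma ncard_cls_pos [Fintype U] (R : Finset A) (z : U) :
    (0:ℝ) < ((cls f R z).ncard : ℝ) := by
  have h : 0 < (cls f R z).ncard :=
    (Set.ncard_pos (Set.toFinite _)).mpr ⟨z, mem_cls_self f R z⟩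
  exact_mod_cast h

lemma key_sum [Fintype U] (C : Finset A) (S Y : Set U)
    (hS : ∀ y ∈ S, cls f C y ⊆ S) :
    ∑ y ∈ S.toFinset, (((cls f C y ∩ Y).ncard : ℝ) / ((cls f C y).ncard : ℝ))
      = ((S ∩ Y).ncard : ℝ) := by
  have step1 : ∀ y ∈ S.toFinset,
      (((cls f C y ∩ Y).ncard : ℝ) / ((cls f C y).ncard : ℝ))
        = ∑ z ∈ S.toFinset,
            (if z ∈ cls f C y ∩ Y then ((cls f C y).ncard : ℝ)⁻¹ else 0) := by
    intro y hy
    have hfe : S.toFinset.filter (fun z => z ∈ cls f C y ∩ Y)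
        = (cls f C y ∩ Y).toFinset := by
      ext z
      simp only [Finset.mem_filter, Set.mem_toFinset]
      exact ⟨fun h => h.2, fun h => ⟨hS y (Set.mem_toFinset.mp hy) h.1, h⟩⟩
    rw [Finset.sum_ite, Finset.sum_const, Finset.sum_const_zero, add_zero, hfe,
      nsmul_eq_mul, ← Set.ncard_eq_toFinset_card', div_eq_mul_inv]
  rw [Finset.sum_congr rfl step1, Finset.sum_comm]
  have step3 : ∀ z ∈ S.toFinset,
      (∑ y ∈ S.toFinset,
          (if z ∈ cls f C y ∩ Y then ((cls f C y).ncard : ℝ)⁻¹ else 0))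
        = (if z ∈ Y then (1:ℝ) else 0) := by
    intro z hz
    have hzS : z ∈ S := Set.mem_toFinset.mp hz
    by_cases hzY : z ∈ Y
    · have hcong : ∀ y ∈ S.toFinset,
          (if z ∈ cls f C y ∩ Y then ((cls f C y).ncard : ℝ)⁻¹ else 0)
            = (if y ∈ cls f C z then ((cls f C z).ncard : ℝ)⁻¹ else 0) := by
        intro y _
        by_cases h : y ∈ cls f C z
        · have he : cls f C y = cls f C z := cls_eq_of_mem f h
          rw [if_pos ⟨he ▸ mem_cls_self f C z, hzY⟩, if_pos h, he]
        · rw [if_neg, if_neg h]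
          intro hc
          exact h (cls_symm f hc.1)
      rw [Finset.sum_congr rfl hcong, if_pos hzY, Finset.sum_ite,
        Finset.sum_const, Finset.sum_const_zero, add_zero]
      have hfe : S.toFinset.filter (fun y => y ∈ cls f C z)
          = (cls f C z).toFinset := by
        ext y
        simp only [Finset.mem_filter, Set.mem_toFinset]
        exact ⟨fun h => h.2, fun h => ⟨hS z hzS h, h⟩⟩
      rw [hfe, nsmul_eq_mul, ← Set.ncard_eq_toFinset_card']
      exact mul_inv_cancel₀ (ne_of_gt (ncard_cls_pos f C z))
    · rw [if_neg hzY]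
      apply Finset.sum_eq_zero
      intro y _
      rw [if_neg]
      intro hc
      exact hzY hc.2
  rw [Finset.sum_congr rfl step3, Finset.sum_ite, Finset.sum_const,
    Finset.sum_const_zero, add_zero, nsmul_eq_mul, mul_one]
  congr 1
  rw [Set.ncard_eq_toFinset_card']
  congr 1
  ext z
  simp only [Finset.mem_filter, Set.mem_toFinset, Set.mem_inter_iff]

lemma mem_aprUp_of_cls {C : Finset A} {β : ℝ} {Y : Set U} {x y : U}
    (h : y ∈ cls f C x) (hx : x ∈ aprUp f C β Y) : y ∈ aprUp f C β Y := by
  unfold aprUp at *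
  rwa [Set.mem_setOf_eq, cls_eq_of_mem f h]

lemma subset_upperA (R : Finset A) (X : Set U) : X ⊆ upperA f R X :=
  fun x hx => ⟨x, mem_cls_self f R x, hx⟩

lemma upperA_anti {R S : Finset A} (h : R ⊆ S) (X : Set U) :
    upperA f S X ⊆ upperA f R X :=
  fun x ⟨y, hy1, hy2⟩ => ⟨y, cls_anti f h x hy1, hy2⟩

lemma upperA_C_aprUp (C : Finset A) (β : ℝ) (Y : Set U) :
    upperA f C (aprUp f C β Y) = aprUp f C β Y := by
  apply Set.Subset.antisymm _ (subset_upperA f C _)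
  rintro x ⟨y, hy1, hy2⟩
  exact mem_aprUp_of_cls f (cls_symm f hy1) hy2

lemma fixed_iff_consistent [Fintype U] {C R : Finset A} (hR : R ⊆ C)
    (β : ℝ) (Y : Set U) :
    upperA f R (aprUp f C β Y) = aprUp f C β Y ↔
      aprUp f R β Y = aprUp f C β Y := by
  constructor
  · intro h
    apply Set.Subset.antisymm
    · intro x hx
      by_contra hxc
      have hall : ∀ y ∈ cls f R x, ¬ y ∈ aprUp f C β Y := by
        intro y hy hyc
        exact hxc (h ▸ (⟨y, hy, hyc⟩ : x ∈ upperA f R (aprUp f C β Y)))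
      have hsat : ∀ y ∈ cls f R x, cls f C y ⊆ cls f R x := by
        intro y hy
        exact (cls_eq_of_mem f hy) ▸ (cls_anti f hR y)
      have hkey := key_sum f C (cls f R x) Y hsat
      have hle : ∑ y ∈ (cls f R x).toFinset,
          (((cls f C y ∩ Y).ncard : ℝ) / ((cls f C y).ncard : ℝ))
          ≤ ∑ _y ∈ (cls f R x).toFinset, β := by
        apply Finset.sum_le_sum
        intro y hy
        have hny := hall y (Set.mem_toFinset.mp hy)
        unfold aprUp at hny
        rw [Set.mem_setOf_eq, not_lt] at hny
        rw [div_le_iff₀ (ncard_cls_pos f C y)]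
        linarith [hny]
      rw [hkey, Finset.sum_const, nsmul_eq_mul, ← Set.ncard_eq_toFinset_card'] at hle
      unfold aprUp at hx
      rw [Set.mem_setOf_eq] at hx
      linarith
    · intro x hx
      have hall : ∀ y ∈ cls f R x, y ∈ aprUp f C β Y := by
        intro y hy
        have : y ∈ upperA f R (aprUp f C β Y) := ⟨x, cls_symm f hy, hx⟩
        exact h ▸ this
      have hsat : ∀ y ∈ cls f R x, cls f C y ⊆ cls f R x := by
        intro y hy
        exact (cls_eq_of_mem f hy) ▸ (cls_anti f hR y)
      have hkey := key_sum f C (cls f R x) Y hsat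
      have hlt : ∑ _y ∈ (cls f R x).toFinset, β <
          ∑ y ∈ (cls f R x).toFinset,
            (((cls f C y ∩ Y).ncard : ℝ) / ((cls f C y).ncard : ℝ)) := by
        apply Finset.sum_lt_sum_of_nonempty
        · exact ⟨x, Set.mem_toFinset.mpr (mem_cls_self f R x)⟩
        · intro y hy
          have hyC := hall y (Set.mem_toFinset.mp hy)
          unfold aprUp at hyC
          rw [Set.mem_setOf_eq] at hyC
          rw [lt_div_iff₀ (ncard_cls_pos f C y)]
          linarith [hyC]
      rw [hkey, Finset.sum_const, nsmul_eq_mul, ← Set.ncard_eq_toFinset_card'] at hlt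
      unfold aprUp
      rw [Set.mem_setOf_eq]
      linarith
  · intro h
    apply Set.Subset.antisymm _ (subset_upperA f R _)
    rintro x ⟨y, hy1, hy2⟩
    rw [← h] at hy2 ⊢
    unfold aprUp at hy2 ⊢
    rwa [Set.mem_setOf_eq, ← cls_eq_of_mem f hy1]

variable [Fintype U] [Nonempty U] [DecidableEq V]

lemma mu_eq_iff_consistent (C : Finset A) (d : U → V) (β : ℝ)
    {R : Finset A} (hR : R ⊆ C) :
    mu f C d β R = mu f C d β C ↔ UpperConsistent f C d β R := by
  have hD : ((Fintype.card U : ℝ) * ((Finset.univ.image d).card : ℝ)) ≠ 0 := by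
    have h1 : 0 < Fintype.card U := Fintype.card_pos
    have h2 : 0 < (Finset.univ.image d).card :=
      Finset.card_pos.mpr (Finset.Nonempty.image Finset.univ_nonempty d)
    positivity
  have hterm : ∀ v ∈ Finset.univ.image d,
      ((upperA f C (aprUp f C β (d ⁻¹' {v}))).ncard : ℝ)
        ≤ ((upperA f R (aprUp f C β (d ⁻¹' {v}))).ncard : ℝ) := by
    intro v _
    rw [upperA_C_aprUp]
    exact_mod_cast Set.ncard_le_ncard (subset_upperA f R _) (Set.toFinite _)
  unfold mu
  rw [div_eq_div_iff hD hD, (mul_left_injective₀ hD).eq_iff]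
  constructor
  · intro h
    have := (Finset.sum_eq_sum_iff_of_le hterm).mp h.symm
    intro v hv
    rw [← fixed_iff_consistent f hR β (d ⁻¹' {v})]
    have hc := this v hv
    rw [upperA_C_aprUp] at hc
    refine (Set.eq_of_subset_of_ncard_le (subset_upperA f R _) ?_ (Set.toFinite _)).symm
    exact_mod_cast le_of_eq hc.symm
  · intro h
    apply Finset.sum_congr rfl
    intro v hv
    rw [(fixed_iff_consistent f hR β (d ⁻¹' {v})).mpr (h v hv), upperA_C_aprUp]

lemma consistent_mono (C : Finset A) (d : U → V) (β : ℝ)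
    {R R' : Finset A} (hsub : R' ⊆ R) (hRC : R ⊆ C)
    (h : UpperConsistent f C d β R') : UpperConsistent f C d β R := by
  intro v hv
  rw [← fixed_iff_consistent f hRC β (d ⁻¹' {v})]
  have h1 : upperA f R' (aprUp f C β (d ⁻¹' {v})) = aprUp f C β (d ⁻¹' {v}) :=
    (fixed_iff_consistent f (hsub.trans hRC) β (d ⁻¹' {v})).mpr (h v hv)
  apply Set.Subset.antisymm _ (subset_upperA f R _)
  intro x hx
  exact h1 ▸ upperA_anti f hsub _ hx

end UpperAux

theorem upperReduct_iff {U V A : Type*} [Fintype U] [Nonempty U]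
    [DecidableEq V] [DecidableEq A] (f : A → U → V) (C : Finset A) (d : U → V)
    (α β : ℝ) (hβ0 : 0 ≤ β) (hβα : β < α) (hα1 : α ≤ 1)
    (R : Finset A) (hR : R ⊆ C) :
    UpperReduct f C d β R ↔
      (mu f C d β R = mu f C d β C ∧
        ∀ a ∈ R, mu f C d β (R.erase a) ≠ mu f C d β C) := by
  rw [UpperReduct]
  constructor
  · rintro ⟨hcons, hmin⟩
    refine ⟨(mu_eq_iff_consistent f C d β hR).mpr hcons, ?_⟩
    intro a ha hmu
    have herase : R.erase a ⊆ C := (Finset.erase_subset a R).trans hR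
    exact hmin (R.erase a) (Finset.erase_ssubset ha)
      ((mu_eq_iff_consistent f C d β herase).mp hmu)
  · rintro ⟨h1, h2⟩
    refine ⟨(mu_eq_iff_consistent f C d β hR).mp h1, ?_⟩
    intro R' hss hcons
    obtain ⟨a, haR, haR'⟩ := Finset.exists_of_ssubset hss
    have hsub : R' ⊆ R.erase a := Finset.subset_erase.mpr ⟨hss.subset, haR'⟩
    have herase : R.erase a ⊆ C := (Finset.erase_subset a R).trans hR
    have := consistent_mono f C d β hsub herase hcons
    exact h2 a haR ((mu_eq_iff_consistent f C d β herase).mpr this)
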